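/- arXiv:2006.01802 — 5 statements merged into one kernel-verified Lean document; each statement's English description precedes it below -/
import Mathlib

section
/- (Generalized Doob optional sampling) Let ρ be a DMU satisfying monotonicity, regularity, recursiveness, and conditional translation invariance, and let M = (M_t)_{t=0,...,T} be a ρ-martingale, i.e., M_t = ρ_t(M_{t+1}) for 0 ≤ t < T. Then for any stopping time τ with i ≤ τ ≤ T almost surely, one has ρ_i(M_τ) = M_i for all 0 ≤ i ≤ T. -/
open MeasureTheory

/-!
Backward induction on `i`. The event `{τ = i}` is `F i`-measurable, so regularity and conditional
translation invariance let `ρ i` act only on the part of `M_τ` living on `{τ ≠ i}`, where `M_τ`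
agrees with `M_{τ ∨ (i+1)}`. Recursiveness and the induction hypothesis for the stopping time
`τ ∨ (i+1)` give `ρ i (M_{τ ∨ (i+1)}) = ρ i (M (i+1)) = M i`, and the two pieces glue to `M i`.
-/

section

variable {Ω : Type*} {G : MeasurableSpace Ω} {ρ : (Ω → ℝ) → (Ω → ℝ)}

theorem map_eq_self_of_measurable
    (hreg : ∀ (X : Ω → ℝ) (A : Set Ω), MeasurableSet[G] A → ρ (A.indicator X) = A.indicator (ρ X))
    (hcti : ∀ X Y : Ω → ℝ, Measurable[G] Y → ρ (X + Y) = ρ X + Y)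
    {Y : Ω → ℝ} (hY : Measurable[G] Y) : ρ Y = Y := by
  have hzero : ρ 0 = 0 := by simpa only [Set.indicator_empty'] using hreg 0 ∅ MeasurableSet.empty
  simpa [hzero] using hcti 0 Y hY

theorem map_indicator_add_indicator_compl
    (hreg : ∀ (X : Ω → ℝ) (A : Set Ω), MeasurableSet[G] A → ρ (A.indicator X) = A.indicator (ρ X))
    (hcti : ∀ X Y : Ω → ℝ, Measurable[G] Y → ρ (X + Y) = ρ X + Y)
    {A : Set Ω} (hA : MeasurableSet[G] A) {Y : Ω → ℝ} (hY : Measurable[G] Y) (X : Ω → ℝ) :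
    ρ (A.indicator Y + Aᶜ.indicator X) = A.indicator Y + Aᶜ.indicator (ρ X) := by
  rw [add_comm, hcti _ _ (hY.indicator hA), hreg _ _ hA.compl, add_comm]

theorem measurableSet_max_const_eq {m : MeasurableSpace Ω} {F : Filtration ℕ m} {τ : Ω → ℕ}
    (hτ : ∀ j, MeasurableSet[F j] {ω | τ ω = j}) (k j : ℕ) :
    MeasurableSet[F j] {ω | max (τ ω) k = j} := by
  rcases lt_trichotomy k j with hkj | rfl | hjk
  · convert hτ j using 1
    ext ω
    show max (τ ω) k = j ↔ τ ω = j
    omega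
  · have hle : {ω | max (τ ω) k = k} = ⋃ l ∈ Set.Iic k, {ω | τ ω = l} := by
      ext ω
      simp
    rw [hle]
    exact MeasurableSet.biUnion (Set.to_countable _) fun l hl => F.mono hl _ (hτ l)
  · convert @MeasurableSet.empty Ω (F j) using 1
    ext ω
    exact iff_false_intro (lt_of_lt_of_le hjk (le_max_right _ _)).ne'

theorem stopped_eq_indicator_add_indicator_compl (M : ℕ → Ω → ℝ) {τ : Ω → ℕ} {i : ℕ}
    (hτ : ∀ ω, i ≤ τ ω) :
    (fun ω => M (τ ω) ω) = {ω | τ ω = i}.indicator (M i)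
      + {ω | τ ω = i}ᶜ.indicator (fun ω => M (max (τ ω) (i + 1)) ω) := by
  funext ω
  by_cases hω : τ ω = i
  · simp [hω]
  · have hmax : max (τ ω) (i + 1) = τ ω := max_eq_left (by have := hτ ω; omega)
    simp [hω, hmax]

end

theorem dmu_doob_optional_sampling_general
    {Ω : Type*} {m : MeasurableSpace Ω}
    (F : MeasureTheory.Filtration ℕ m) (T : ℕ)
    (ρ : ℕ → (Ω → ℝ) → (Ω → ℝ))
    (hreg : ∀ t, t ≤ T → ∀ (X : Ω → ℝ) (A : Set Ω), MeasurableSet[F t] A →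
      ρ t (A.indicator X) = A.indicator (ρ t X))
    (hrec : ∀ t, t < T → ∀ (X : Ω → ℝ), ρ t (ρ (t + 1) X) = ρ t X)
    (hcti : ∀ t, t ≤ T → ∀ (X Y : Ω → ℝ), Measurable[F t] Y →
      ρ t (X + Y) = ρ t X + Y)
    (M : ℕ → Ω → ℝ)
    (hMadapted : ∀ t, Measurable[F t] (M t))
    (hMmart : ∀ t, t < T → M t = ρ t (M (t + 1))) :
    ∀ i, i ≤ T → ∀ τ : Ω → ℕ,
      (∀ j, MeasurableSet[F j] {ω | τ ω = j}) →
      (∀ ω, i ≤ τ ω ∧ τ ω ≤ T) →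
      ρ i (fun ω => M (τ ω) ω) = M i := by
  intro i hi
  induction hi using Nat.decreasingInduction with
  | self =>
    intro τ _ hτ
    have hMτ : (fun ω => M (τ ω) ω) = M T :=
      funext fun ω => by rw [le_antisymm (hτ ω).2 (hτ ω).1]
    rw [hMτ]
    exact map_eq_self_of_measurable (hreg T le_rfl) (hcti T le_rfl) (hMadapted T)
  | of_succ i hi ih =>
    intro τ hτm hτ
    have hnext : ρ (i + 1) (fun ω => M (max (τ ω) (i + 1)) ω) = M (i + 1) :=
      ih _ (measurableSet_max_const_eq hτm (i + 1)) fun ω => ⟨le_max_right _ _, max_le (hτ ω).2 hi⟩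
    have hlater : ρ i (fun ω => M (max (τ ω) (i + 1)) ω) = M i := by
      rw [← hrec i hi, hnext, hMmart i hi]
    rw [stopped_eq_indicator_add_indicator_compl M fun ω => (hτ ω).1,
      map_indicator_add_indicator_compl (hreg i hi.le) (hcti i hi.le) (hτm i) (hMadapted i), hlater,
      Set.indicator_self_add_compl]

/-- Generalized Doob optional sampling theorem: for a DMU `ρ` satisfying
(C1)–(C4) and a `ρ`-martingale `M`, for any stopping time `τ` with
`i ≤ τ ≤ T` one has `ρ_i (M_τ) = M_i`, for all `0 ≤ i ≤ T`. -/
theorem dmu_doob_optional_sampling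
    {Ω : Type*} {m : MeasurableSpace Ω}
    (F : MeasureTheory.Filtration ℕ m) (T : ℕ)
    (ρ : ℕ → (Ω → ℝ) → (Ω → ℝ))
    (hmeas : ∀ t (X : Ω → ℝ), Measurable[F t] (ρ t X))
    (hmono : ∀ t, t ≤ T → ∀ (X Y : Ω → ℝ), X ≤ Y → ρ t X ≤ ρ t Y)
    (hreg : ∀ t, t ≤ T → ∀ (X : Ω → ℝ) (A : Set Ω), MeasurableSet[F t] A →
      ρ t (A.indicator X) = A.indicator (ρ t X))
    (hrec : ∀ t, t < T → ∀ (X : Ω → ℝ), ρ t (ρ (t + 1) X) = ρ t X)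
    (hcti : ∀ t, t ≤ T → ∀ (X Y : Ω → ℝ), Measurable[F t] Y →
      ρ t (X + Y) = ρ t X + Y)
    (M : ℕ → Ω → ℝ)
    (hMadapted : ∀ t, Measurable[F t] (M t))
    (hMmart : ∀ t, t < T → M t = ρ t (M (t + 1))) :
    ∀ i, i ≤ T → ∀ τ : Ω → ℕ,
      (∀ j, MeasurableSet[F j] {ω | τ ω = j}) →
      (∀ ω, i ≤ τ ω ∧ τ ω ≤ T) →
      ρ i (fun ω => M (τ ω) ω) = M i :=
  dmu_doob_optional_sampling_general F T ρ hreg hrec hcti M hMadapted hMmart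
end

section
/- Let ρ satisfy (C1)-(C4) and fix t ∈ {0,...,T}. For any stopping time τ with t ≤ τ ≤ T define ρ_τ(X) := Σ_{j=t}^{T} 1_{τ=j} ρ_j(X). Then ρ_τ maps F_T-measurable random variables to F_τ-measurable random variables, and the tower property holds: ρ_t = ρ_t ∘ ρ_τ. -/
/-!
Write `Y_s := ∑_{j=s}^T 1_{τ=j} ρ_j X`. By backward induction on `s`,
`ρ_s Y_s = 1_{τ ≥ s} ρ_s X`: splitting off the term `j = s`, which is `F_s`-measurable, translation
invariance gives `ρ_s Y_s = ρ_s Y_{s+1} + 1_{τ=s} ρ_s X`, and recursiveness together with regularity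
on the `F_s`-measurable event `{τ > s}` gives `ρ_s Y_{s+1} = ρ_s (ρ_{s+1} Y_{s+1}) = 1_{τ > s} ρ_s X`.
At `s = t ≤ τ` the indicator is `1`. Measurability holds because `Y_t` is the value of the adapted
process `(ρ_j X)_j` stopped at `τ`.
-/

open MeasureTheory

namespace DynamicRisk

variable {Ω : Type*}

/-- Condition (C2) for `φ = ρ_s` and `mF = F_s`. -/
def Regular (mF : MeasurableSpace Ω) (φ : (Ω → ℝ) → Ω → ℝ) : Prop :=
  ∀ (X : Ω → ℝ) (A : Set Ω), MeasurableSet[mF] A → φ (A.indicator X) = A.indicator (φ X)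

/-- Condition (C4) for `φ = ρ_s` and `mF = F_s`. -/
def TranslationInvariant (mF : MeasurableSpace Ω) (φ : (Ω → ℝ) → Ω → ℝ) : Prop :=
  ∀ X Y : Ω → ℝ, Measurable[mF] Y → φ (X + Y) = φ X + Y

theorem Regular.map_zero {mF : MeasurableSpace Ω} {φ : (Ω → ℝ) → Ω → ℝ} (h : Regular mF φ) :
    φ 0 = 0 := by
  have h0 := h 0 ∅ MeasurableSet.empty
  rwa [Set.indicator_empty, Set.indicator_empty] at h0

theorem TranslationInvariant.eq_self_of_measurable {mF : MeasurableSpace Ω}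
    {φ : (Ω → ℝ) → Ω → ℝ} (hinv : TranslationInvariant mF φ) (hreg : Regular mF φ)
    {Y : Ω → ℝ} (hY : Measurable[mF] Y) : φ Y = Y := by
  simpa [hreg.map_zero] using hinv 0 Y hY

/-- The functional `ρ_τ` evaluated on `X`, with the sum over `j` started at `s`. -/
noncomputable def stoppedRisk (ρ : ℕ → (Ω → ℝ) → Ω → ℝ) (τ : Ω → ℕ) (s T : ℕ) (X : Ω → ℝ) : Ω → ℝ :=
  fun ω => ∑ j ∈ Finset.Icc s T, {ω' | τ ω' = j}.indicator (ρ j X) ω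

variable {ρ : ℕ → (Ω → ℝ) → Ω → ℝ} {τ : Ω → ℕ} {T : ℕ} {X : Ω → ℝ}

theorem stoppedRisk_self :
    stoppedRisk ρ τ T T X = {ω | τ ω = T}.indicator (ρ T X) := by
  ext ω
  simp [stoppedRisk]

theorem stoppedRisk_eq_indicator_add {s : ℕ} (hs : s ≤ T) :
    stoppedRisk ρ τ s T X = {ω | τ ω = s}.indicator (ρ s X) + stoppedRisk ρ τ (s + 1) T X := by
  ext ω
  simp only [stoppedRisk, Pi.add_apply, Finset.Icc_add_one_left_eq_Ioc]
  exact (Finset.add_sum_Ioc_eq_sum_Icc hs).symm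

theorem stoppedRisk_eq_stoppedValue {s : ℕ} (hτ : ∀ ω, τ ω ∈ Finset.Icc s T) :
    stoppedRisk ρ τ s T X = stoppedValue (fun j => ρ j X) (fun ω => (τ ω : WithTop ℕ)) := by
  rw [stoppedValue_eq_of_mem_finset (τ := fun ω => (τ ω : WithTop ℕ)) fun ω => ⟨τ ω, hτ ω, rfl⟩]
  ext ω
  simp [stoppedRisk, Finset.sum_apply]

theorem measurable_stoppedRisk {m : MeasurableSpace Ω} {F : Filtration ℕ m} {s : ℕ}
    (hmeas : ∀ j, Measurable[F j] (ρ j X)) (hτ : IsStoppingTime F fun ω => (τ ω : WithTop ℕ))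
    (hτs : ∀ ω, τ ω ∈ Finset.Icc s T) :
    Measurable[hτ.measurableSpace] (stoppedRisk ρ τ s T X) := by
  rw [stoppedRisk_eq_stoppedValue hτs]
  exact measurable_stoppedValue
    (StronglyAdapted.isStronglyProgressive_of_discrete fun j => (hmeas j).stronglyMeasurable) hτ

theorem indicator_le_eq_indicator_eq_add_indicator_lt {M : Type*} [AddMonoid M] (f : Ω → M)
    (s : ℕ) :
    {ω | s ≤ τ ω}.indicator f = {ω | τ ω = s}.indicator f + {ω | s < τ ω}.indicator f := by
  have hsplit : {ω | s ≤ τ ω} = {ω | τ ω = s} ∪ {ω | s < τ ω} := by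
    ext ω
    simp only [Set.mem_ofPred_eq, Set.mem_union]
    omega
  have hdisj : Disjoint {ω | τ ω = s} {ω | s < τ ω} :=
    Set.disjoint_left.2 fun ω (h : τ ω = s) (h' : s < τ ω) => h'.ne' h
  rw [hsplit, Set.indicator_union_of_disjoint hdisj]
  rfl

theorem apply_stoppedRisk {m : MeasurableSpace Ω} {F : Filtration ℕ m}
    (hmeas : ∀ j, Measurable[F j] (ρ j X))
    (hreg : ∀ s, s ≤ T → Regular (F s) (ρ s))
    (hrec : ∀ s, s < T → ∀ Y : Ω → ℝ, ρ s (ρ (s + 1) Y) = ρ s Y)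
    (hinv : ∀ s, s ≤ T → TranslationInvariant (F s) (ρ s))
    (hτ : IsStoppingTime F fun ω => (τ ω : WithTop ℕ)) (hτT : ∀ ω, τ ω ≤ T)
    {s : ℕ} (hs : s ≤ T) :
    ρ s (stoppedRisk ρ τ s T X) = {ω | s ≤ τ ω}.indicator (ρ s X) := by
  have hstop : ∀ j, Measurable[F j] ({ω | τ ω = j}.indicator (ρ j X)) := fun j =>
    (hmeas j).indicator (by simpa using hτ.measurableSet_eq j)
  induction hs using Nat.decreasingInduction with
  | self =>
    have hτ_eq : {ω | τ ω = T} = {ω | T ≤ τ ω} :=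
      Set.ext fun ω => ⟨fun h => h.ge, fun h => le_antisymm (hτT ω) h⟩
    rw [stoppedRisk_self, (hinv T le_rfl).eq_self_of_measurable (hreg T le_rfl) (hstop T), hτ_eq]
  | of_succ s hsT ih =>
    have hlt : MeasurableSet[F s] {ω | s < τ ω} := by
      simpa using hτ.measurableSet_gt s
    have hnext : ρ s (stoppedRisk ρ τ (s + 1) T X) = {ω | s < τ ω}.indicator (ρ s X) := by
      rw [← hrec s hsT, ih]
      simp_rw [Nat.add_one_le_iff]
      rw [← hreg (s + 1) hsT _ _ (F.mono s.le_succ _ hlt), hrec s hsT, hreg s hsT.le _ _ hlt]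
    rw [stoppedRisk_eq_indicator_add hsT.le, add_comm, hinv s hsT.le _ _ (hstop s), hnext,
      indicator_le_eq_indicator_eq_add_indicator_lt, add_comm]

end DynamicRisk

open DynamicRisk in
theorem dmu_stopped_tower_general
    {Ω : Type*} {m : MeasurableSpace Ω}
    (F : MeasureTheory.Filtration ℕ m) (T t : ℕ) (ht : t ≤ T)
    (ρ : ℕ → (Ω → ℝ) → (Ω → ℝ))
    (hmeas : ∀ s (X : Ω → ℝ), Measurable[F s] (ρ s X))
    (hreg : ∀ s, s ≤ T → ∀ (X : Ω → ℝ) (A : Set Ω), MeasurableSet[F s] A →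
      ρ s (A.indicator X) = A.indicator (ρ s X))
    (hrec : ∀ s, s < T → ∀ (X : Ω → ℝ), ρ s (ρ (s + 1) X) = ρ s X)
    (hcti : ∀ s, s ≤ T → ∀ (X Y : Ω → ℝ), Measurable[F s] Y →
      ρ s (X + Y) = ρ s X + Y)
    (τ : Ω → ℕ) (hτ : IsStoppingTime F (fun ω => (τ ω : WithTop ℕ)))
    (hτb : ∀ ω, t ≤ τ ω ∧ τ ω ≤ T) :
    ∀ X : Ω → ℝ, Measurable[F T] X →
      Measurable[hτ.measurableSpace]
        (fun ω => ∑ j ∈ Finset.Icc t T, ({ω' | τ ω' = j}.indicator (ρ j X)) ω) ∧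
      ρ t (fun ω => ∑ j ∈ Finset.Icc t T, ({ω' | τ ω' = j}.indicator (ρ j X)) ω)
        = ρ t X := by
  intro X _
  refine ⟨measurable_stoppedRisk (hmeas · X) hτ fun ω => Finset.mem_Icc.2 (hτb ω), ?_⟩
  calc ρ t (stoppedRisk ρ τ t T X)
      = {ω | t ≤ τ ω}.indicator (ρ t X) :=
        apply_stoppedRisk (hmeas · X) hreg hrec hcti hτ (fun ω => (hτb ω).2) ht
    _ = ρ t X := Set.indicator_eq_self.2 fun ω _ => (hτb ω).1

/-- For a DMU `ρ` satisfying (C1)–(C4), fixed `t` and a stopping time `τ` with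
`t ≤ τ ≤ T`, the functional `ρ_τ X := ∑_{j=t}^T 1_{τ=j} ρ_j X` maps
`F_T`-measurable random variables to `F_τ`-measurable ones, and the tower
property `ρ_t = ρ_t ∘ ρ_τ` holds. -/
theorem dmu_stopped_tower
    {Ω : Type*} {m : MeasurableSpace Ω}
    (F : MeasureTheory.Filtration ℕ m) (T t : ℕ) (ht : t ≤ T)
    (ρ : ℕ → (Ω → ℝ) → (Ω → ℝ))
    (hmeas : ∀ s (X : Ω → ℝ), Measurable[F s] (ρ s X))
    (hmono : ∀ s, s ≤ T → ∀ (X Y : Ω → ℝ), X ≤ Y → ρ s X ≤ ρ s Y)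
    (hreg : ∀ s, s ≤ T → ∀ (X : Ω → ℝ) (A : Set Ω), MeasurableSet[F s] A →
      ρ s (A.indicator X) = A.indicator (ρ s X))
    (hrec : ∀ s, s < T → ∀ (X : Ω → ℝ), ρ s (ρ (s + 1) X) = ρ s X)
    (hcti : ∀ s, s ≤ T → ∀ (X Y : Ω → ℝ), Measurable[F s] Y →
      ρ s (X + Y) = ρ s X + Y)
    (τ : Ω → ℕ) (hτ : IsStoppingTime F (fun ω => (τ ω : WithTop ℕ)))
    (hτb : ∀ ω, t ≤ τ ω ∧ τ ω ≤ T) :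
    ∀ X : Ω → ℝ, Measurable[F T] X →
      Measurable[hτ.measurableSpace]
        (fun ω => ∑ j ∈ Finset.Icc t T, ({ω' | τ ω' = j}.indicator (ρ j X)) ω) ∧
      ρ t (fun ω => ∑ j ∈ Finset.Icc t T, ({ω' | τ ω' = j}.indicator (ρ j X)) ω)
        = ρ t X :=
  dmu_stopped_tower_general F T t ht ρ hmeas hreg hrec hcti τ hτ hτb
end

section
/- If ρ satisfies (C1)-(C4), subadditivity (P1) and sensitivity (P2) ([X ≤ 0 and ρ_t(X) ≥ 0] implies X = 0), then the reverse sensitivity holds: for all X ∈ X and t, if X ≥ 0 and ρ_t(X) ≤ 0 then X = 0 almost surely. -/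
open MeasureTheory

/-! The empty set is in every `F t`, so regularity forces `ρ t 0 = 0`; subadditivity then gives
`0 = ρ t (X + -X) ≤ ρ t X + ρ t (-X)`. For `X ≥ 0` with `ρ t X ≤ 0` this makes `-X ≤ 0` with
`ρ t (-X) ≥ 0`, and sensitivity yields `-X = 0`. -/

theorem map_zero_of_indicator_empty {Ω β γ : Type*} [Zero β] [Zero γ]
    {f : (Ω → β) → (Ω → γ)} (hf : ∀ X, f ((∅ : Set Ω).indicator X) = (∅ : Set Ω).indicator (f X)) :
    f 0 = 0 := by
  simpa only [Set.indicator_empty'] using hf 0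

theorem add_map_neg_nonneg_of_subadditive {G H : Type*} [AddGroup G] [AddMonoid H] [Preorder H]
    {f : G → H} (hf₀ : f 0 = 0) (hsub : ∀ x y, f (x + y) ≤ f x + f y) (x : G) :
    0 ≤ f x + f (-x) := by
  simpa [hf₀] using hsub x (-x)

theorem dmu_reverse_sensitivity_general
    {Ω : Type*} {m : MeasurableSpace Ω} (μ : Measure Ω)
    (F : MeasureTheory.Filtration ℕ m) (T : ℕ)
    (ρ : ℕ → (Ω → ℝ) → (Ω → ℝ))
    (hreg : ∀ t, t ≤ T → ∀ (X : Ω → ℝ) (A : Set Ω), MeasurableSet[F t] A →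
      ρ t (A.indicator X) = A.indicator (ρ t X))
    (hsub : ∀ t, t ≤ T → ∀ (X Y : Ω → ℝ), ρ t (X + Y) ≤ ρ t X + ρ t Y)
    (hsens : ∀ t, t ≤ T → ∀ X : Ω → ℝ,
      (∀ᵐ ω ∂μ, X ω ≤ 0) → (∀ᵐ ω ∂μ, 0 ≤ ρ t X ω) → X =ᵐ[μ] 0) :
    ∀ t, t ≤ T → ∀ X : Ω → ℝ,
      (∀ᵐ ω ∂μ, 0 ≤ X ω) → (∀ᵐ ω ∂μ, ρ t X ω ≤ 0) → X =ᵐ[μ] 0 := by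
  intro t ht X hX hρX
  have hρ₀ : ρ t 0 = 0 :=
    map_zero_of_indicator_empty fun Y => hreg t ht Y ∅ (@MeasurableSet.empty Ω (F t))
  have hρ_add_neg := add_map_neg_nonneg_of_subadditive hρ₀ (hsub t ht) X
  have hneg : -X =ᵐ[μ] 0 := by
    refine hsens t ht (-X) ?_ ?_
    · filter_upwards [hX] with ω hω using neg_nonpos.mpr hω
    · filter_upwards [hρX] with ω hω
      linarith [show 0 ≤ ρ t X ω + ρ t (-X) ω from hρ_add_neg ω]
  simpa using hneg.neg

/-- If a DMU `ρ` satisfies (C1)–(C4), subadditivity (P1) and sensitivity (P2),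
then the reverse sensitivity holds: if `X ≥ 0` and `ρ_t X ≤ 0` then
`X = 0` almost surely. -/
theorem dmu_reverse_sensitivity
    {Ω : Type*} {m : MeasurableSpace Ω} (μ : Measure Ω) [IsProbabilityMeasure μ]
    (F : MeasureTheory.Filtration ℕ m) (T : ℕ)
    (ρ : ℕ → (Ω → ℝ) → (Ω → ℝ))
    (hmono : ∀ t, t ≤ T → ∀ (X Y : Ω → ℝ), X ≤ Y → ρ t X ≤ ρ t Y)
    (hreg : ∀ t, t ≤ T → ∀ (X : Ω → ℝ) (A : Set Ω), MeasurableSet[F t] A →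
      ρ t (A.indicator X) = A.indicator (ρ t X))
    (hrec : ∀ t, t < T → ∀ (X : Ω → ℝ), ρ t (ρ (t + 1) X) = ρ t X)
    (hcti : ∀ t, t ≤ T → ∀ (X Y : Ω → ℝ), Measurable[F t] Y →
      ρ t (X + Y) = ρ t X + Y)
    (hsub : ∀ t, t ≤ T → ∀ (X Y : Ω → ℝ), ρ t (X + Y) ≤ ρ t X + ρ t Y)
    (hsens : ∀ t, t ≤ T → ∀ X : Ω → ℝ,
      (∀ᵐ ω ∂μ, X ω ≤ 0) → (∀ᵐ ω ∂μ, 0 ≤ ρ t X ω) → X =ᵐ[μ] 0) :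
    ∀ t, t ≤ T → ∀ X : Ω → ℝ,
      (∀ᵐ ω ∂μ, 0 ≤ X ω) → (∀ᵐ ω ∂μ, ρ t X ω ≤ 0) → X =ᵐ[μ] 0 :=
  dmu_reverse_sensitivity_general μ F T ρ hreg hsub hsens
end

section
/- (Non-pathwise additive dual representation for robust single stopping) Let ρ satisfy (C1)-(C4), let Y*_t = sup over stopping times τ ∈ {t,...,T} of ρ_t(H_τ) be the upper Snell envelope of an adapted reward process H, and let M* be the ρ-martingale of the ρ-Doob decomposition Y*_t = Y*_0 + M*_t − A*_t (so that M*_{t+1} − M*_t = Y*_{t+1} − ρ_t(Y*_{t+1})). Then for each t ∈ {0,...,T}: Y*_t = inf over ρ-martingales M with M_0 = 0 of ρ_t(max_{t ≤ j ≤ T}(H_j + M_T − M_j)), and the infimum is attained at M*: Y*_t = ρ_t(max_{t ≤ j ≤ T}(H_j + M*_T − M*_j)). -/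
/-!
Weak duality is a backward induction on `t`: `Y*_t` is the larger of `H_t` and `ρ_t(Y*_{t+1})`.
For any `ρ`-martingale `M`, translation invariance and `ρ_t(M_T) = M_t` give
`H_t = ρ_t(H_t + M_T - M_t)`, while recursiveness and monotonicity push the induction hypothesis
`Y*_{t+1} ≤ ρ_{t+1}(…)` through `ρ_t`. For the Doob martingale `M*` the process `Y* - M*` is
non-increasing, because `Y*_{r+1} - M*_{r+1} = ρ_r(Y*_{r+1}) - M*_r ≤ Y*_r - M*_r`; hence
`H_j + M*_T - M*_j ≤ Y*_t - M*_t + M*_T` for `t ≤ j ≤ T`, and `ρ_t` of the right side is `Y*_t`.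
-/

open MeasureTheory

section OneStep

variable {Ω : Type*} {m : MeasurableSpace Ω} {φ : (Ω → ℝ) → Ω → ℝ}

theorem map_zero_of_map_indicator
    (hreg : ∀ (X : Ω → ℝ) (A : Set Ω), MeasurableSet[m] A →
      φ (A.indicator X) = A.indicator (φ X)) :
    φ 0 = 0 := by
  have h := hreg 0 ∅ MeasurableSet.empty
  rwa [Set.indicator_empty, Set.indicator_empty] at h

theorem map_eq_self_of_measurable_s9 (h0 : φ 0 = 0)
    (hcti : ∀ X Y : Ω → ℝ, Measurable[m] Y → φ (X + Y) = φ X + Y)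
    {X : Ω → ℝ} (hX : Measurable[m] X) : φ X = X := by
  simpa [h0] using hcti 0 X hX

end OneStep

section DualRepresentation

variable {Ω : Type*} {m : MeasurableSpace Ω} {F : Filtration ℕ m} {T : ℕ}
  {ρ : ℕ → (Ω → ℝ) → (Ω → ℝ)} {H Y M : ℕ → Ω → ℝ}

noncomputable def dualPayoff (H M : ℕ → Ω → ℝ) {t T : ℕ} (ht : t ≤ T) : Ω → ℝ :=
  fun ω => (Finset.Icc t T).sup' (Finset.nonempty_Icc.mpr ht) fun j => H j ω + M T ω - M j ω

theorem dualPayoff_self : dualPayoff H M (le_refl T) = H T := by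
  funext ω
  simp [dualPayoff]

theorem add_sub_le_dualPayoff {t : ℕ} (ht : t ≤ T) : H t + M T - M t ≤ dualPayoff H M ht :=
  fun ω => Finset.le_sup' (fun j => H j ω + M T ω - M j ω) (Finset.mem_Icc.mpr ⟨le_rfl, ht⟩)

theorem dualPayoff_succ_le {t : ℕ} (ht : t < T) :
    dualPayoff H M (Nat.succ_le_of_lt ht) ≤ dualPayoff H M ht.le :=
  fun _ => Finset.sup'_mono _ (Finset.Icc_subset_Icc (Nat.le_succ t) le_rfl) _

theorem rho_terminal_eq_of_martingale
    (hrec : ∀ s, s < T → ∀ X : Ω → ℝ, ρ s (ρ (s + 1) X) = ρ s X)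
    (hMT : ρ T (M T) = M T) (hmart : ∀ s, s < T → M s = ρ s (M (s + 1)))
    {t : ℕ} (ht : t ≤ T) : ρ t (M T) = M t := by
  induction ht using Nat.decreasingInduction with
  | self => exact hMT
  | of_succ s hs ih => rw [← hrec s hs, ih, hmart s hs]

theorem le_rho_dualPayoff
    (hmono : ∀ s, s ≤ T → ∀ X Y : Ω → ℝ, X ≤ Y → ρ s X ≤ ρ s Y)
    (hrec : ∀ s, s < T → ∀ X : Ω → ℝ, ρ s (ρ (s + 1) X) = ρ s X)
    (hcti : ∀ s, s ≤ T → ∀ X Y : Ω → ℝ, Measurable[F s] Y → ρ s (X + Y) = ρ s X + Y)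
    (hid : ∀ s, s ≤ T → ∀ X : Ω → ℝ, Measurable[F s] X → ρ s X = X)
    (hH : ∀ s, Measurable[F s] (H s)) (hYT : Y T = H T)
    (hBell : ∀ r, r < T → ∀ ω, Y r ω = max (H r ω) (ρ r (Y (r + 1)) ω))
    (hM : ∀ s, s ≤ T → Measurable[F s] (M s)) (hmart : ∀ s, s < T → M s = ρ s (M (s + 1)))
    {t : ℕ} (ht : t ≤ T) : Y t ≤ ρ t (dualPayoff H M ht) := by
  induction ht using Nat.decreasingInduction with
  | self => rw [dualPayoff_self, hYT, hid T le_rfl _ (hH T)]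
  | of_succ t ht ih =>
    have hstop : H t = ρ t (H t + M T - M t) := by
      rw [add_sub_right_comm, add_comm, hcti t ht.le _ _ ((hH t).sub (hM t ht.le)),
        rho_terminal_eq_of_martingale hrec (hid T le_rfl _ (hM T le_rfl)) hmart ht.le]
      abel
    have hcont : ρ t (Y (t + 1)) ≤ ρ t (dualPayoff H M ht.le) :=
      calc ρ t (Y (t + 1))
          ≤ ρ t (ρ (t + 1) (dualPayoff H M (Nat.succ_le_of_lt ht))) := hmono t ht.le _ _ ih
        _ = ρ t (dualPayoff H M (Nat.succ_le_of_lt ht)) := hrec t ht _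
        _ ≤ ρ t (dualPayoff H M ht.le) := hmono t ht.le _ _ (dualPayoff_succ_le ht)
    intro ω
    rw [hBell t ht ω]
    refine max_le ?_ (hcont ω)
    rw [hstop]
    exact hmono t ht.le _ _ (add_sub_le_dualPayoff ht.le) ω

theorem reward_le_of_bellman (hYT : Y T = H T)
    (hBell : ∀ r, r < T → ∀ ω, Y r ω = max (H r ω) (ρ r (Y (r + 1)) ω))
    {j : ℕ} (hj : j ≤ T) : H j ≤ Y j := by
  intro ω
  rcases hj.eq_or_lt with rfl | hj
  · rw [hYT]
  · rw [hBell j hj ω]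
    exact le_max_left _ _

theorem measurable_of_bellman (hmeas : ∀ s (X : Ω → ℝ), Measurable[F s] (ρ s X))
    (hH : ∀ s, Measurable[F s] (H s)) (hYT : Y T = H T)
    (hBell : ∀ r, r < T → ∀ ω, Y r ω = max (H r ω) (ρ r (Y (r + 1)) ω))
    {s : ℕ} (hs : s ≤ T) : Measurable[F s] (Y s) := by
  rcases hs.eq_or_lt with rfl | hs
  · rw [hYT]
    exact hH s
  · rw [funext (hBell s hs)]
    exact (hH s).max (hmeas s _)

section Doob

variable {Mstar : ℕ → Ω → ℝ}

theorem doob_succ_eq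
    (hMinc : ∀ r, r < T → ∀ ω, Mstar (r + 1) ω - Mstar r ω = Y (r + 1) ω - ρ r (Y (r + 1)) ω)
    {r : ℕ} (hr : r < T) : Mstar (r + 1) = Y (r + 1) + (Mstar r - ρ r (Y (r + 1))) := by
  funext ω
  have := hMinc r hr ω
  simp only [Pi.add_apply, Pi.sub_apply]
  linarith

theorem measurable_doob (hmeas : ∀ s (X : Ω → ℝ), Measurable[F s] (ρ s X))
    (hY : ∀ s, s ≤ T → Measurable[F s] (Y s)) (hM0 : Mstar 0 = 0)
    (hMinc : ∀ r, r < T → ∀ ω, Mstar (r + 1) ω - Mstar r ω = Y (r + 1) ω - ρ r (Y (r + 1)) ω)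
    {s : ℕ} (hs : s ≤ T) : Measurable[F s] (Mstar s) := by
  induction s with
  | zero => rw [hM0]; exact measurable_const
  | succ s ih =>
    have hFs : F s ≤ F (s + 1) := F.mono s.le_succ
    rw [doob_succ_eq hMinc hs]
    exact (hY _ hs).add (((ih (by omega)).mono hFs le_rfl).sub ((hmeas s _).mono hFs le_rfl))

theorem doob_martingale (hmeas : ∀ s (X : Ω → ℝ), Measurable[F s] (ρ s X))
    (hcti : ∀ s, s ≤ T → ∀ X Y : Ω → ℝ, Measurable[F s] Y → ρ s (X + Y) = ρ s X + Y)
    (hM : ∀ s, s ≤ T → Measurable[F s] (Mstar s))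
    (hMinc : ∀ r, r < T → ∀ ω, Mstar (r + 1) ω - Mstar r ω = Y (r + 1) ω - ρ r (Y (r + 1)) ω)
    {s : ℕ} (hs : s < T) : Mstar s = ρ s (Mstar (s + 1)) := by
  rw [doob_succ_eq hMinc hs, hcti s hs.le _ _ ((hM s hs.le).sub (hmeas s _))]
  abel

theorem sub_doob_le_of_bellman
    (hBell : ∀ r, r < T → ∀ ω, Y r ω = max (H r ω) (ρ r (Y (r + 1)) ω))
    (hMinc : ∀ r, r < T → ∀ ω, Mstar (r + 1) ω - Mstar r ω = Y (r + 1) ω - ρ r (Y (r + 1)) ω)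
    {t j : ℕ} (htj : t ≤ j) (hj : j ≤ T) : Y j - Mstar j ≤ Y t - Mstar t := by
  induction j, htj using Nat.le_induction with
  | base => exact le_rfl
  | succ j _ ih =>
    intro ω
    have hcont : ρ j (Y (j + 1)) ω ≤ Y j ω := by
      rw [hBell j hj ω]
      exact le_max_right _ _
    have := hMinc j hj ω
    have := ih (by omega) ω
    simp only [Pi.sub_apply] at *
    linarith

theorem dualPayoff_doob_le (hYT : Y T = H T)
    (hBell : ∀ r, r < T → ∀ ω, Y r ω = max (H r ω) (ρ r (Y (r + 1)) ω))
    (hMinc : ∀ r, r < T → ∀ ω, Mstar (r + 1) ω - Mstar r ω = Y (r + 1) ω - ρ r (Y (r + 1)) ω)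
    {t : ℕ} (ht : t ≤ T) : dualPayoff H Mstar ht ≤ Mstar T + (Y t - Mstar t) := by
  intro ω
  refine Finset.sup'_le _ _ fun j hj => ?_
  obtain ⟨htj, hjT⟩ := Finset.mem_Icc.mp hj
  have := reward_le_of_bellman hYT hBell hjT ω
  have := sub_doob_le_of_bellman hBell hMinc htj hjT ω
  simp only [Pi.add_apply, Pi.sub_apply] at *
  linarith

end Doob

end DualRepresentation

/-- Non-pathwise additive dual representation for robust single stopping:
for a DMU `ρ` satisfying (C1)–(C4), the upper Snell envelope `Y*` (given by
the Bellman recursion) satisfies, for each `t ≤ T`,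
`Y*_t ≤ ρ_t (max_{t ≤ j ≤ T} (H_j + M_T - M_j))` for every `ρ`-martingale `M`
with `M_0 = 0`, and the infimum is attained at the `ρ`-Doob martingale `M*`:
`Y*_t = ρ_t (max_{t ≤ j ≤ T} (H_j + M*_T - M*_j))`. -/
theorem dmu_additive_dual_representation
    {Ω : Type*} {m : MeasurableSpace Ω}
    (F : MeasureTheory.Filtration ℕ m) (T : ℕ)
    (ρ : ℕ → (Ω → ℝ) → (Ω → ℝ))
    (hmeas : ∀ s (X : Ω → ℝ), Measurable[F s] (ρ s X))
    (hmono : ∀ s, s ≤ T → ∀ (X Y : Ω → ℝ), X ≤ Y → ρ s X ≤ ρ s Y)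
    (hreg : ∀ s, s ≤ T → ∀ (X : Ω → ℝ) (A : Set Ω), MeasurableSet[F s] A →
      ρ s (A.indicator X) = A.indicator (ρ s X))
    (hrec : ∀ s, s < T → ∀ (X : Ω → ℝ), ρ s (ρ (s + 1) X) = ρ s X)
    (hcti : ∀ s, s ≤ T → ∀ (X Y : Ω → ℝ), Measurable[F s] Y →
      ρ s (X + Y) = ρ s X + Y)
    (H : ℕ → Ω → ℝ) (hHadapted : ∀ s, Measurable[F s] (H s))
    (Ystar : ℕ → Ω → ℝ)
    (hYT : Ystar T = H T)
    (hBell : ∀ r, r < T → ∀ ω,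
      Ystar r ω = max (H r ω) (ρ r (Ystar (r + 1)) ω))
    (Mstar : ℕ → Ω → ℝ)
    (hM0 : Mstar 0 = 0)
    (hMinc : ∀ r, r < T → ∀ ω,
      Mstar (r + 1) ω - Mstar r ω = Ystar (r + 1) ω - ρ r (Ystar (r + 1)) ω)
    (t : ℕ) (ht : t ≤ T) :
    (∀ M : ℕ → Ω → ℝ, (∀ s, Measurable[F s] (M s)) →
        (∀ s, s < T → M s = ρ s (M (s + 1))) → M 0 = 0 →
        ∀ ω, Ystar t ω ≤
          ρ t (fun ω' => (Finset.Icc t T).sup' (Finset.nonempty_Icc.mpr ht)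
            (fun j => H j ω' + M T ω' - M j ω')) ω) ∧
    (∀ ω, Ystar t ω =
      ρ t (fun ω' => (Finset.Icc t T).sup' (Finset.nonempty_Icc.mpr ht)
        (fun j => H j ω' + Mstar T ω' - Mstar j ω')) ω) := by
  have hid : ∀ s, s ≤ T → ∀ X : Ω → ℝ, Measurable[F s] X → ρ s X = X := fun s hs _ hX =>
    map_eq_self_of_measurable_s9 (map_zero_of_map_indicator (hreg s hs)) (hcti s hs) hX
  have hY := fun s (hs : s ≤ T) => measurable_of_bellman hmeas hHadapted hYT hBell hs
  have hMs := fun s (hs : s ≤ T) => measurable_doob hmeas hY hM0 hMinc hs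
  have hMsmart := fun s (hs : s < T) => doob_martingale hmeas hcti hMs hMinc hs
  refine ⟨fun M hM hmart _ => le_rho_dualPayoff hmono hrec hcti hid hHadapted hYT hBell
    (fun s _ => hM s) hmart ht, fun ω => le_antisymm
    (le_rho_dualPayoff hmono hrec hcti hid hHadapted hYT hBell hMs hMsmart ht ω) ?_⟩
  calc ρ t (dualPayoff H Mstar ht) ω
      ≤ ρ t (Mstar T + (Ystar t - Mstar t)) ω :=
        hmono t ht _ _ (dualPayoff_doob_le hYT hBell hMinc ht) ω
    _ = Ystar t ω := by
      rw [hcti t ht _ _ ((hY t ht).sub (hMs t ht)),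
        rho_terminal_eq_of_martingale hrec (hid T le_rfl _ (hMs T le_rfl)) hMsmart ht]
      simp
end

section
/- (Key pathwise inequality for the Doob martingale) Let ρ satisfy (C1)-(C4), let Y* be the upper Snell envelope of H satisfying the Bellman principle Y*_r = max(H_r, ρ_r(Y*_{r+1})), and let M* be the ρ-Doob martingale with increments M*_{r+1} − M*_r = Y*_{r+1} − ρ_r(Y*_{r+1}). Then for every t ≤ j ≤ T, H_j + M*_t − M*_j ≤ Y*_t pointwise almost surely; consequently max_{t ≤ j ≤ T}(H_j + M*_t − M*_j) ≤ Y*_t a.s. -/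
/-!
Along every path, `Y* - M*` is nonincreasing on `{0, …, T}`: the Doob increment replaces
`Y*_{r+1}` by `ρ_r(Y*_{r+1})`, which the Bellman principle bounds by `Y*_r`. Since the Bellman
principle also gives `H_j ≤ Y*_j`, we get `H_j + M*_t - M*_j ≤ Y*_j - M*_j + M*_t ≤ Y*_t`.
-/

section SnellEnvelope

variable {Ω : Type*} {T : ℕ} {ρ : ℕ → (Ω → ℝ) → (Ω → ℝ)} {H Ystar Mstar : ℕ → Ω → ℝ}

lemma payoff_le_of_bellman (hYT : Ystar T = H T)
    (hBell : ∀ r, r < T → ∀ ω, Ystar r ω = max (H r ω) (ρ r (Ystar (r + 1)) ω))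
    {j : ℕ} (hj : j ≤ T) (ω : Ω) : H j ω ≤ Ystar j ω := by
  rcases hj.lt_or_eq with hjT | rfl
  · exact hBell j hjT ω ▸ le_max_left _ _
  · rw [hYT]

lemma sub_doob_succ_le
    (hBell : ∀ r, r < T → ∀ ω, Ystar r ω = max (H r ω) (ρ r (Ystar (r + 1)) ω))
    (hMinc : ∀ r, r < T → ∀ ω,
      Mstar (r + 1) ω - Mstar r ω = Ystar (r + 1) ω - ρ r (Ystar (r + 1)) ω)
    {r : ℕ} (hr : r < T) (ω : Ω) :
    Ystar (r + 1) ω - Mstar (r + 1) ω ≤ Ystar r ω - Mstar r ω := by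
  have hρ : ρ r (Ystar (r + 1)) ω ≤ Ystar r ω := hBell r hr ω ▸ le_max_right _ _
  linarith [hMinc r hr ω]

lemma sub_doob_le_of_le
    (hBell : ∀ r, r < T → ∀ ω, Ystar r ω = max (H r ω) (ρ r (Ystar (r + 1)) ω))
    (hMinc : ∀ r, r < T → ∀ ω,
      Mstar (r + 1) ω - Mstar r ω = Ystar (r + 1) ω - ρ r (Ystar (r + 1)) ω)
    {t j : ℕ} (htj : t ≤ j) (hjT : j ≤ T) (ω : Ω) :
    Ystar j ω - Mstar j ω ≤ Ystar t ω - Mstar t ω := by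
  induction j, htj using Nat.le_induction with
  | base => rfl
  | succ k _ ih =>
    exact (sub_doob_succ_le hBell hMinc hjT ω).trans (ih (Nat.le_of_succ_le hjT))

end SnellEnvelope

open MeasureTheory

theorem dmu_pathwise_inequality_general
    {Ω : Type*} (T : ℕ)
    (ρ : ℕ → (Ω → ℝ) → (Ω → ℝ))
    (H : ℕ → Ω → ℝ)
    (Ystar : ℕ → Ω → ℝ)
    (hYT : Ystar T = H T)
    (hBell : ∀ r, r < T → ∀ ω,
      Ystar r ω = max (H r ω) (ρ r (Ystar (r + 1)) ω))
    (Mstar : ℕ → Ω → ℝ)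
    (hMinc : ∀ r, r < T → ∀ ω,
      Mstar (r + 1) ω - Mstar r ω = Ystar (r + 1) ω - ρ r (Ystar (r + 1)) ω)
    (t : ℕ) (ht : t ≤ T) :
    (∀ ω, ∀ j, t ≤ j → j ≤ T →
      H j ω + Mstar t ω - Mstar j ω ≤ Ystar t ω) ∧
    (∀ ω, (Finset.Icc t T).sup' (Finset.nonempty_Icc.mpr ht)
        (fun j => H j ω + Mstar t ω - Mstar j ω) ≤ Ystar t ω) := by
  have pathwise : ∀ ω, ∀ j, t ≤ j → j ≤ T → H j ω + Mstar t ω - Mstar j ω ≤ Ystar t ω :=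
    fun ω j htj hjT => by
      linarith [payoff_le_of_bellman hYT hBell hjT ω, sub_doob_le_of_le hBell hMinc htj hjT ω]
  refine ⟨pathwise, fun ω => Finset.sup'_le _ _ fun j hj => ?_⟩
  obtain ⟨htj, hjT⟩ := Finset.mem_Icc.mp hj
  exact pathwise ω j htj hjT

/-- Key pathwise inequality for the `ρ`-Doob martingale: if `Y*` satisfies the
Bellman principle `Y*_r = max (H_r, ρ_r Y*_{r+1})` and `M*` has Doob increments
`M*_{r+1} - M*_r = Y*_{r+1} - ρ_r (Y*_{r+1})`, then for every `t ≤ j ≤ T`,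
`H_j + M*_t - M*_j ≤ Y*_t` pointwise, and consequently
`max_{t ≤ j ≤ T} (H_j + M*_t - M*_j) ≤ Y*_t`. -/
theorem dmu_pathwise_inequality
    {Ω : Type*} {m : MeasurableSpace Ω}
    (F : MeasureTheory.Filtration ℕ m) (T : ℕ)
    (ρ : ℕ → (Ω → ℝ) → (Ω → ℝ))
    (hmeas : ∀ s (X : Ω → ℝ), Measurable[F s] (ρ s X))
    (hmono : ∀ s, s ≤ T → ∀ (X Y : Ω → ℝ), X ≤ Y → ρ s X ≤ ρ s Y)
    (hreg : ∀ s, s ≤ T → ∀ (X : Ω → ℝ) (A : Set Ω), MeasurableSet[F s] A →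
      ρ s (A.indicator X) = A.indicator (ρ s X))
    (hrec : ∀ s, s < T → ∀ (X : Ω → ℝ), ρ s (ρ (s + 1) X) = ρ s X)
    (hcti : ∀ s, s ≤ T → ∀ (X Y : Ω → ℝ), Measurable[F s] Y →
      ρ s (X + Y) = ρ s X + Y)
    (H : ℕ → Ω → ℝ)
    (Ystar : ℕ → Ω → ℝ)
    (hYT : Ystar T = H T)
    (hBell : ∀ r, r < T → ∀ ω,
      Ystar r ω = max (H r ω) (ρ r (Ystar (r + 1)) ω))
    (Mstar : ℕ → Ω → ℝ)
    (hM0 : Mstar 0 = 0)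
    (hMinc : ∀ r, r < T → ∀ ω,
      Mstar (r + 1) ω - Mstar r ω = Ystar (r + 1) ω - ρ r (Ystar (r + 1)) ω)
    (t : ℕ) (ht : t ≤ T) :
    (∀ ω, ∀ j, t ≤ j → j ≤ T →
      H j ω + Mstar t ω - Mstar j ω ≤ Ystar t ω) ∧
    (∀ ω, (Finset.Icc t T).sup' (Finset.nonempty_Icc.mpr ht)
        (fun j => H j ω + Mstar t ω - Mstar j ω) ≤ Ystar t ω) :=
  dmu_pathwise_inequality_general T ρ H Ystar hYT hBell Mstar hMinc t ht
end
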